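/- arXiv:1211.3732 — 4 statements merged into one kernel-verified Lean document; each statement's English description precedes it below -/
import Mathlib

section
/- Let d ≥ 1 be an integer, δ ∈ (0,1) and K₀ ≥ 0. Let H(u', u'', t, x), with u' ∈ ℝ^{d+1}, u'' a symmetric d×d matrix, (t,x) ∈ ℝ × ℝ^d, be a real-valued function that is Lipschitz continuous in u'' and such that at every point of differentiability of H with respect to u'' the derivative, represented as a symmetric matrix a via w ↦ tr(a w), belongs to 𝕊_δ. Suppose that H̄₊ := sup over (u',t,x) of ( max(H(u',0,t,x),0) − K₀|u'| ) is finite. Then there is a constant κ > 0 depending only on δ and d such that for all u = (u',u'') and (t,x): H(u,t,x) ≤ P₀(u'') − κ‖u''‖_F + K₀|u'| + H̄₊, where ‖u''‖_F is the Frobenius norm of u''. -/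
open scoped BigOperators NNReal

attribute [local instance] Matrix.frobeniusNormedAddCommGroup Matrix.frobeniusNormedSpace

noncomputable section

/-- `𝕊_θ`: symmetric `d×d` matrices with `θ|ξ|² ≤ ⟨aξ,ξ⟩ ≤ θ⁻¹|ξ|²`. -/
def Sdelta (d : ℕ) (θ : ℝ) : Set (Matrix (Fin d) (Fin d) ℝ) :=
  {a | a.IsHermitian ∧ ∀ ξ : Fin d → ℝ,
    θ * (∑ i, ξ i ^ 2) ≤ (∑ i, ∑ j, a i j * ξ j * ξ i) ∧
      (∑ i, ∑ j, a i j * ξ j * ξ i) ≤ θ⁻¹ * (∑ i, ξ i ^ 2)}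

/-- Frobenius norm of a matrix. -/
def frobNorm (d : ℕ) (M : Matrix (Fin d) (Fin d) ℝ) : ℝ :=
  Real.sqrt (∑ i, ∑ j, (M i j) ^ 2)

/-- Euclidean norm of a vector. -/
def eunorm {n : ℕ} (u : Fin n → ℝ) : ℝ :=
  Real.sqrt (∑ i, u i ^ 2)

/-- Pucci's operator `P₀(M) = 2δ⁻¹ Σ λ_k⁺(M) − (δ/2) Σ λ_k⁻(M)` (for Hermitian `M`;
junk value `0` otherwise). -/
def pucci (d : ℕ) (δ : ℝ) (M : Matrix (Fin d) (Fin d) ℝ) : ℝ :=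
  if h : M.IsHermitian then
    2 * δ⁻¹ * (∑ k, max (h.eigenvalues k) 0) - (δ / 2) * (∑ k, max (-(h.eigenvalues k)) 0)
  else 0

/-!
Write `H(M)` for `H(u', M, t, x)`. Since `H` is Lipschitz in `u''`, Rademacher's theorem makes
it differentiable almost everywhere along almost every line in direction `M`, and integrating the
derivative gives `H(M) - H(0) ≤ sup_{a ∈ 𝕊_δ} tr(a M)`. Diagonalising `M = Σ λ_k e_k e_kᵀ`,
`tr(a M) = Σ λ_k ⟨a e_k, e_k⟩` with `⟨a e_k, e_k⟩ ∈ [δ, δ⁻¹]`, so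
`tr(a M) ≤ Σ (δ⁻¹ λ_k⁺ - δ λ_k⁻) ≤ P₀(M) - (δ/2) Σ |λ_k| ≤ P₀(M) - (δ/2) ‖M‖_F`.
Finally `H(0) ≤ K₀|u'| + H̄₊`, so `κ = δ/2` works.
-/

open MeasureTheory Set Filter

theorem AbsolutelyContinuousOnInterval.sub_le_mul_of_ae_deriv_le {f : ℝ → ℝ} {a b B : ℝ}
    (hf : AbsolutelyContinuousOnInterval f a b) (hab : a ≤ b)
    (hB : ∀ᵐ t, t ∈ Icc a b → DifferentiableAt ℝ f t → deriv f t ≤ B) :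
    f b - f a ≤ B * (b - a) := by
  rw [← hf.integral_deriv_eq_sub]
  have := intervalIntegral.integral_mono_ae_restrict (g := fun _ ↦ B) hab
    hf.intervalIntegrable_deriv intervalIntegrable_const ?_
  · simpa [mul_comm] using this
  · rw [EventuallyLE, ae_restrict_iff' measurableSet_Icc]
    filter_upwards [hB, hf.ae_differentiableAt] with t hB hd ht
    exact hB ht (hd (by rwa [uIcc_of_le hab]))

/-- By Rademacher's theorem and Fubini, almost every line `t ↦ y + t • v` meets the
non-differentiability set of `f` in a null set; along such a line the one-dimensional bound
applies, and the set of such `y` is dense. -/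
theorem LipschitzWith.sub_le_of_fderiv_apply_le {E : Type*} [NormedAddCommGroup E]
    [NormedSpace ℝ E] [FiniteDimensional ℝ E] {f : E → ℝ} {K : ℝ≥0} (hf : LipschitzWith K f)
    {v : E} {B : ℝ} (hB : ∀ p, DifferentiableAt ℝ f p → fderiv ℝ f p v ≤ B) (x : E) :
    f (x + v) - f x ≤ B := by
  borelize E
  let L : ℝ →L[ℝ] E := (1 : ℝ →L[ℝ] ℝ).smulRight v
  have hgood : ∀ᵐ y ∂(Measure.addHaar : Measure E), ∀ᵐ t : ℝ, DifferentiableAt ℝ f (y + L t) :=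
    (ae_ae_add_linearMap_mem_iff L.toLinearMap volume _
      (measurableSet_of_differentiableAt ℝ f)).2 hf.ae_differentiableAt
  have hclosed : IsClosed {y | f (y + v) - f y ≤ B} :=
    isClosed_le ((hf.continuous.comp (continuous_add_const v)).sub hf.continuous)
      continuous_const
  refine hclosed.closure_subset_iff.2 (fun y hy ↦ ?_)
    ((Measure.dense_of_ae hgood).closure_eq ▸ mem_univ x)
  have hline := hf.comp ((LipschitzWith.const y).add L.lipschitz)
  have hderiv : ∀ᵐ t, t ∈ Icc (0 : ℝ) 1 → DifferentiableAt ℝ (f ∘ fun t ↦ y + L t) t →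
      deriv (f ∘ fun t ↦ y + L t) t ≤ B := by
    filter_upwards [hy] with t ht _ _
    rw [(ht.hasFDerivAt.comp_hasDerivAt t (L.hasDerivAt.const_add y)).deriv]
    simpa [L] using hB _ ht
  simpa [L] using (hline.lipschitzOnWith (s := uIcc 0 1)).absolutelyContinuousOnInterval
    |>.sub_le_mul_of_ae_deriv_le zero_le_one hderiv

namespace Matrix

section Symmetrization

variable {n : Type*}

def symmPart : Matrix n n ℝ →ₗ[ℝ] Matrix n n ℝ :=
  (2⁻¹ : ℝ) • (LinearMap.id + (transposeLinearEquiv n n ℝ ℝ).toLinearMap)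

lemma symmPart_apply (A : Matrix n n ℝ) : symmPart A = (2⁻¹ : ℝ) • (A + Aᵀ) := rfl

lemma isHermitian_symmPart (A : Matrix n n ℝ) : (symmPart A).IsHermitian := by
  ext i j
  simp only [symmPart_apply, conjTranspose_apply, star_trivial, smul_apply, add_apply,
    transpose_apply, smul_eq_mul]
  ring

lemma symmPart_of_isHermitian {A : Matrix n n ℝ} (hA : A.IsHermitian) : symmPart A = A := by
  have hAt : Aᵀ = A := by simpa using hA.eq
  rw [symmPart_apply, hAt, ← two_smul ℝ A, smul_smul, inv_mul_cancel₀ two_ne_zero, one_smul]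

lemma norm_symmPart_le [Fintype n] (A : Matrix n n ℝ) : ‖symmPart A‖ ≤ ‖A‖ := by
  rw [symmPart_apply, norm_smul]
  calc ‖(2⁻¹ : ℝ)‖ * ‖A + Aᵀ‖ ≤ 2⁻¹ * (‖A‖ + ‖Aᵀ‖) := by
        rw [Real.norm_of_nonneg (by norm_num)]; gcongr; exact norm_add_le _ _
    _ = ‖A‖ := by rw [frobenius_norm_transpose]; ring

end Symmetrization

end Matrix

lemma frobNorm_eq_norm {d : ℕ} (M : Matrix (Fin d) (Fin d) ℝ) : frobNorm d M = ‖M‖ := by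
  simp [frobNorm, Matrix.frobenius_norm_def, Real.sqrt_eq_rpow]

theorem sub_le_of_hasFDerivWithinAt_isHermitian {d : ℕ} {h : Matrix (Fin d) (Fin d) ℝ → ℝ}
    {C : ℝ} (hC : ∀ y y' : Matrix (Fin d) (Fin d) ℝ, y.IsHermitian → y'.IsHermitian →
      |h y - h y'| ≤ C * frobNorm d (y - y'))
    {S : Set (Matrix (Fin d) (Fin d) ℝ)}
    (hder : ∀ (N : Matrix (Fin d) (Fin d) ℝ) (f' : Matrix (Fin d) (Fin d) ℝ →L[ℝ] ℝ),
      N.IsHermitian → HasFDerivWithinAt h f' {A | A.IsHermitian} N →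
      ∃ a ∈ S, ∀ w : Matrix (Fin d) (Fin d) ℝ, w.IsHermitian → f' w = (a * w).trace)
    {N M : Matrix (Fin d) (Fin d) ℝ} (hN : N.IsHermitian) (hM : M.IsHermitian) {B : ℝ}
    (hB : ∀ a ∈ S, (a * M).trace ≤ B) :
    h (N + M) - h N ≤ B := by
  -- `h` is only controlled on symmetric matrices, so we pass to `h ∘ symmPart`; it is invariant
  -- under translation by the antisymmetric part `c` of `p`, which moves a point of
  -- differentiability `p` to the symmetric point `symmPart p`.
  set F := fun A ↦ h (Matrix.symmPart A)
  have hF_lip : LipschitzWith (Real.toNNReal (max C 0)) F := by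
    refine LipschitzWith.of_dist_le' fun A A' ↦ ?_
    calc dist (F A) (F A') ≤ C * ‖Matrix.symmPart A - Matrix.symmPart A'‖ := by
          rw [Real.dist_eq, ← frobNorm_eq_norm]
          exact hC _ _ (Matrix.isHermitian_symmPart A) (Matrix.isHermitian_symmPart A')
      _ ≤ max C 0 * ‖Matrix.symmPart (A - A')‖ := by
          rw [map_sub]; gcongr; exact le_max_left _ _
      _ ≤ max C 0 * dist A A' := by
          rw [dist_eq_norm]; gcongr; exact Matrix.norm_symmPart_le _
  have hF_der : ∀ p, DifferentiableAt ℝ F p → fderiv ℝ F p M ≤ B := by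
    intro p hp
    set c := p - Matrix.symmPart p
    have hFc : (fun A ↦ F (A + c)) = F := by
      ext A
      simp [F, c, map_sub, Matrix.symmPart_of_isHermitian (Matrix.isHermitian_symmPart p)]
    have hp' : HasFDerivAt F (fderiv ℝ F p) (Matrix.symmPart p + c) := by
      rw [show Matrix.symmPart p + c = p by simp [c]]
      exact hp.hasFDerivAt
    have hF := (hasFDerivAt_comp_add_right c).2 hp'
    rw [hFc] at hF
    have hh : HasFDerivWithinAt h (fderiv ℝ F p) {A | A.IsHermitian} (Matrix.symmPart p) :=
      hF.hasFDerivWithinAt.congr (fun A hA ↦ by simp [F, Matrix.symmPart_of_isHermitian hA.out])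
        (by simp [F, Matrix.symmPart_of_isHermitian (Matrix.isHermitian_symmPart p)])
    obtain ⟨a, ha, hrep⟩ := hder _ _ (Matrix.isHermitian_symmPart p) hh
    exact hrep M hM ▸ hB a ha
  have := hF_lip.sub_le_of_fderiv_apply_le hF_der N
  simpa only [F, Matrix.symmPart_of_isHermitian hN, Matrix.symmPart_of_isHermitian (hN.add hM)]
    using this

namespace Matrix

namespace IsHermitian

variable {n : Type*} [Fintype n] [DecidableEq n] {M : Matrix n n ℝ} (hM : M.IsHermitian)
include hM

lemma apply_eq_sum_eigenvalues_mul (i j : n) :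
    M i j = ∑ k, hM.eigenvalues k * hM.eigenvectorBasis k i * hM.eigenvectorBasis k j := by
  conv_lhs => rw [hM.spectral_theorem]
  simp [mul_apply, Unitary.conjStarAlgAut_apply, diagonal_apply, mul_comm]

lemma trace_mul_eq_sum_eigenvalues_mul (a : Matrix n n ℝ) :
    (a * M).trace = ∑ k, hM.eigenvalues k *
      ∑ i, ∑ j, a i j * hM.eigenvectorBasis k j * hM.eigenvectorBasis k i := by
  simp only [trace, diag, mul_apply, hM.apply_eq_sum_eigenvalues_mul, Finset.mul_sum]
  refine (Finset.sum_congr rfl fun i _ ↦ Finset.sum_comm).trans Finset.sum_comm |>.trans ?_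
  exact Finset.sum_congr rfl fun k _ ↦ Finset.sum_congr rfl fun i _ ↦
    Finset.sum_congr rfl fun j _ ↦ by ring

lemma sum_sq_eigenvectorBasis (k : n) : ∑ i, hM.eigenvectorBasis k i ^ 2 = 1 := by
  rw [← EuclideanSpace.real_norm_sq_eq, hM.eigenvectorBasis.orthonormal.1 k, one_pow]

lemma sum_mul_eigenvectorBasis_eq_eigenvalues (k : n) :
    ∑ i, ∑ j, M i j * hM.eigenvectorBasis k j * hM.eigenvectorBasis k i = hM.eigenvalues k := by
  rw [hM.eigenvalues_eq k]
  simp [dotProduct, mulVec, Finset.mul_sum, mul_comm, mul_left_comm]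

lemma sum_sq_apply_eq_sum_sq_eigenvalues : ∑ i, ∑ j, M i j ^ 2 = ∑ k, hM.eigenvalues k ^ 2 :=
  calc ∑ i, ∑ j, M i j ^ 2 = (M * M).trace :=
        Finset.sum_congr rfl fun i _ ↦ Finset.sum_congr rfl fun j _ ↦ by
          dsimp only; rw [sq, ← hM.apply j i, star_trivial]
    _ = ∑ k, hM.eigenvalues k ^ 2 := by
        simp only [hM.trace_mul_eq_sum_eigenvalues_mul, hM.sum_mul_eigenvectorBasis_eq_eigenvalues,
          sq]

end IsHermitian

end Matrix

lemma Matrix.IsHermitian.frobNorm_le_sum_abs_eigenvalues {d : ℕ} {M : Matrix (Fin d) (Fin d) ℝ}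
    (hM : M.IsHermitian) : frobNorm d M ≤ ∑ k, |hM.eigenvalues k| := by
  rw [frobNorm, hM.sum_sq_apply_eq_sum_sq_eigenvalues,
    Real.sqrt_le_left (Finset.sum_nonneg fun k _ ↦ abs_nonneg _)]
  simpa only [sq_abs] using Finset.sum_sq_le_sq_sum_of_nonneg (s := Finset.univ)
    (f := fun k ↦ |hM.eigenvalues k|) fun k _ ↦ abs_nonneg _

lemma mul_le_pucci_summand_sub {δ l q : ℝ} (hδ : 0 < δ) (hδ2 : δ ^ 2 ≤ 2) (hq : q ∈ Icc δ δ⁻¹) :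
    l * q ≤ 2 * δ⁻¹ * max l 0 - δ / 2 * max (-l) 0 - δ / 2 * |l| := by
  obtain ⟨hq1, hq2⟩ := hq
  rcases le_total 0 l with hl | hl
  · have : δ / 2 ≤ δ⁻¹ := by field_simp; exact hδ2
    rw [max_eq_left hl, max_eq_right (by linarith), abs_of_nonneg hl]
    nlinarith
  · rw [max_eq_right hl, max_eq_left (by linarith), abs_of_nonpos hl]
    nlinarith

theorem trace_mul_le_pucci_sub_frobNorm {d : ℕ} {δ : ℝ} (hδ : 0 < δ) (hδ2 : δ ^ 2 ≤ 2)
    {a M : Matrix (Fin d) (Fin d) ℝ} (ha : a ∈ Sdelta d δ) (hM : M.IsHermitian) :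
    (a * M).trace ≤ pucci d δ M - δ / 2 * frobNorm d M := by
  have hq : ∀ k, ∑ i, ∑ j, a i j * hM.eigenvectorBasis k j * hM.eigenvectorBasis k i ∈
      Icc δ δ⁻¹ := fun k ↦ by
    simpa [hM.sum_sq_eigenvectorBasis k] using ha.2 (hM.eigenvectorBasis k)
  rw [hM.trace_mul_eq_sum_eigenvalues_mul, pucci, dif_pos hM]
  calc _ ≤ ∑ k, (2 * δ⁻¹ * max (hM.eigenvalues k) 0 - δ / 2 * max (-hM.eigenvalues k) 0
          - δ / 2 * |hM.eigenvalues k|) :=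
        Finset.sum_le_sum fun k _ ↦ mul_le_pucci_summand_sub hδ hδ2 (hq k)
    _ = 2 * δ⁻¹ * ∑ k, max (hM.eigenvalues k) 0 - δ / 2 * ∑ k, max (-hM.eigenvalues k) 0
          - δ / 2 * ∑ k, |hM.eigenvalues k| := by
        simp only [Finset.sum_sub_distrib, Finset.mul_sum]
    _ ≤ _ := by gcongr; exact hM.frobNorm_le_sum_abs_eigenvalues

theorem H_le_pucci_sub_kappa_general (d : ℕ) (δ : ℝ) (hδ : δ ∈ Set.Ioo (0:ℝ) 1) :
    ∃ κ : ℝ, 0 < κ ∧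
      ∀ (K₀ : ℝ), 0 ≤ K₀ →
      ∀ (H : (Fin (d + 1) → ℝ) → Matrix (Fin d) (Fin d) ℝ → ℝ → (Fin d → ℝ) → ℝ),
        -- Lipschitz continuity of `H` in `u''`
        (∃ C : ℝ, ∀ (u' : Fin (d + 1) → ℝ) (t : ℝ) (x : Fin d → ℝ)
            (y y' : Matrix (Fin d) (Fin d) ℝ), y.IsHermitian → y'.IsHermitian →
            |H u' y t x - H u' y' t x| ≤ C * frobNorm d (y - y')) →
        -- at points of differentiability in `u''` the derivative lies in `𝕊_δ`
        (∀ (u' : Fin (d + 1) → ℝ) (t : ℝ) (x : Fin d → ℝ)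
            (M : Matrix (Fin d) (Fin d) ℝ) (f' : Matrix (Fin d) (Fin d) ℝ →L[ℝ] ℝ),
            M.IsHermitian →
            HasFDerivWithinAt (fun y => H u' y t x) f' {A | A.IsHermitian} M →
            ∃ a ∈ Sdelta d δ, ∀ w : Matrix (Fin d) (Fin d) ℝ, w.IsHermitian →
              f' w = Matrix.trace (a * w)) →
      ∀ (Hbarp : ℝ),
        -- `H̄₊ = sup (H⁺(u',0,t,x) − K₀|u'|)` is finite, bounded by `Hbarp`
        (∀ (u' : Fin (d + 1) → ℝ) (t : ℝ) (x : Fin d → ℝ),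
            max (H u' 0 t x) 0 - K₀ * eunorm u' ≤ Hbarp) →
      ∀ (u' : Fin (d + 1) → ℝ) (M : Matrix (Fin d) (Fin d) ℝ), M.IsHermitian →
        ∀ (t : ℝ) (x : Fin d → ℝ),
          H u' M t x ≤ pucci d δ M - κ * frobNorm d M + K₀ * eunorm u' + Hbarp := by
  obtain ⟨hδ0, hδ1⟩ := hδ
  refine ⟨δ / 2, half_pos hδ0, fun K₀ _ H ⟨C, hC⟩ hder Hbarp hHbar u' M hM t x ↦ ?_⟩
  have hmean := sub_le_of_hasFDerivWithinAt_isHermitian (hC u' t x) (hder u' t x)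
    Matrix.isHermitian_zero hM fun a ha ↦
      trace_mul_le_pucci_sub_frobNorm hδ0 (by nlinarith) ha hM
  rw [zero_add] at hmean
  linarith [hHbar u' t x, le_max_left (H u' 0 t x) 0]

/-- Inequality (9.29.2) of Lemma 3.2 of Krylov, "An ersatz existence theorem for
fully nonlinear parabolic equations without convexity assumptions":
`H ≤ P₀ − κ‖u''‖_F + K₀|u'| + H̄₊` with `κ > 0` depending only on `δ` and `d`.
The finite supremum `H̄₊` is expressed through an arbitrary upper bound `Hbarp`. -/
theorem H_le_pucci_sub_kappa (d : ℕ) (hd : 1 ≤ d) (δ : ℝ) (hδ : δ ∈ Set.Ioo (0:ℝ) 1) :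
    ∃ κ : ℝ, 0 < κ ∧
      ∀ (K₀ : ℝ), 0 ≤ K₀ →
      ∀ (H : (Fin (d + 1) → ℝ) → Matrix (Fin d) (Fin d) ℝ → ℝ → (Fin d → ℝ) → ℝ),
        -- Lipschitz continuity of `H` in `u''`
        (∃ C : ℝ, ∀ (u' : Fin (d + 1) → ℝ) (t : ℝ) (x : Fin d → ℝ)
            (y y' : Matrix (Fin d) (Fin d) ℝ), y.IsHermitian → y'.IsHermitian →
            |H u' y t x - H u' y' t x| ≤ C * frobNorm d (y - y')) →
        -- at points of differentiability in `u''` the derivative lies in `𝕊_δ`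
        (∀ (u' : Fin (d + 1) → ℝ) (t : ℝ) (x : Fin d → ℝ)
            (M : Matrix (Fin d) (Fin d) ℝ) (f' : Matrix (Fin d) (Fin d) ℝ →L[ℝ] ℝ),
            M.IsHermitian →
            HasFDerivWithinAt (fun y => H u' y t x) f' {A | A.IsHermitian} M →
            ∃ a ∈ Sdelta d δ, ∀ w : Matrix (Fin d) (Fin d) ℝ, w.IsHermitian →
              f' w = Matrix.trace (a * w)) →
      ∀ (Hbarp : ℝ),
        -- `H̄₊ = sup (H⁺(u',0,t,x) − K₀|u'|)` is finite, bounded by `Hbarp`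
        (∀ (u' : Fin (d + 1) → ℝ) (t : ℝ) (x : Fin d → ℝ),
            max (H u' 0 t x) 0 - K₀ * eunorm u' ≤ Hbarp) →
      ∀ (u' : Fin (d + 1) → ℝ) (M : Matrix (Fin d) (Fin d) ℝ), M.IsHermitian →
        ∀ (t : ℝ) (x : Fin d → ℝ),
          H u' M t x ≤ pucci d δ M - κ * frobNorm d M + K₀ * eunorm u' + Hbarp :=
  H_le_pucci_sub_kappa_general d δ hδ
end
end

section
/- Let d ≥ 1 be an integer, δ ∈ (0,1), and let l₁,…,l_m ∈ ℝ^d and δ̂ ∈ (0, δ/4] be such that every a ∈ 𝕊_{δ/4} can be written as a = Σ_{k=1}^m λ_k l_k l_kᵀ with λ_k ∈ [δ̂, δ̂⁻¹] for all k. Define P(M) = max over (a₁,…,a_m) ∈ [δ̂/2, 2δ̂⁻¹]^m of Σ_{k=1}^m a_k ⟨M l_k, l_k⟩ for symmetric d×d matrices M. Then for every symmetric d×d matrix M, P(M) ≥ P₀(M) + (δ/4) Σ_{k=1}^d |λ_k(M)|, where λ_1(M),…,λ_d(M) are the eigenvalues of M. -/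
open scoped BigOperators NNReal

attribute [local instance] Matrix.frobeniusNormedAddCommGroup Matrix.frobeniusNormedSpace

noncomputable section

/-- The quadratic form `⟨M w, w⟩ = Σ_{i,j} M i j * w j * w i`. -/
def quadForm (d : ℕ) (M : Matrix (Fin d) (Fin d) ℝ) (w : Fin d → ℝ) : ℝ :=
  ∑ i, ∑ j, M i j * w j * w i

/-- The operator `P(M) = max over (a₁,…,a_m) ∈ [δ̂/2, 2δ̂⁻¹]^m of Σ_k a_k ⟨M l_k, l_k⟩`. -/
def Pop (d m : ℕ) (δhat : ℝ) (l : Fin m → Fin d → ℝ)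
    (M : Matrix (Fin d) (Fin d) ℝ) : ℝ :=
  sSup {s : ℝ | ∃ a : Fin m → ℝ,
    (∀ k, δhat / 2 ≤ a k ∧ a k ≤ 2 * δhat⁻¹) ∧ s = ∑ k, a k * quadForm d M (l k)}

/-! Diagonalise `M = U diag(x) Uᵀ` and put `a = U diag(c) Uᵀ` with `c_r = 4/δ` if `x_r ≥ 0` and
`c_r = δ/4` otherwise. Then `a ∈ 𝕊_{δ/4}` and `tr(M a) = 4δ⁻¹ Σ x⁺ - (δ/4) Σ x⁻ =: T`. Writing
`a = Σ μ_k l_k l_kᵀ` turns `T` into `Σ μ_k ⟨M l_k, l_k⟩`; since both `2μ_k` and `μ_k/2` are admissible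
coefficients for `P`, we get `P(M) ≥ max (2T) (T/2)`, and a case distinction on the sign of `T`
shows that this dominates `P₀(M) + (δ/4) Σ |x_r|`. -/

open Matrix

lemma quadForm_eq_dotProduct {d : ℕ} (M : Matrix (Fin d) (Fin d) ℝ) (w : Fin d → ℝ) :
    quadForm d M w = w ⬝ᵥ M *ᵥ w := by
  simp only [quadForm, dotProduct, mulVec, Finset.mul_sum]
  exact Finset.sum_congr rfl fun i _ => Finset.sum_congr rfl fun j _ => by ring

lemma trace_mul_eq_sum_mul_quadForm {d m : ℕ} (M a : Matrix (Fin d) (Fin d) ℝ)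
    (lam : Fin m → ℝ) (l : Fin m → Fin d → ℝ) (ha : ∀ i j, a i j = ∑ k, lam k * l k i * l k j) :
    trace (M * a) = ∑ k, lam k * quadForm d M (l k) := by
  simp only [trace, diag, mul_apply, ha, quadForm, Finset.mul_sum]
  rw [Finset.sum_congr rfl fun i _ => Finset.sum_comm, Finset.sum_comm]
  exact Finset.sum_congr rfl fun k _ => Finset.sum_congr rfl fun i _ =>
    Finset.sum_congr rfl fun j _ => by ring

section Conj

variable {n : Type*} [Fintype n] [DecidableEq n] {U : Matrix n n ℝ}

lemma trace_conj_diagonal_mul_conj_diagonal (hU : U ∈ unitaryGroup n ℝ) (x y : n → ℝ) :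
    trace ((U * diagonal x * star U) * (U * diagonal y * star U)) = ∑ i, x i * y i := by
  have hU' : star U * U = 1 := Unitary.star_mul_self_of_mem hU
  calc trace ((U * diagonal x * star U) * (U * diagonal y * star U))
      = trace (U * (diagonal x * diagonal y) * star U) := by
        simp only [Matrix.mul_assoc, ← Matrix.mul_assoc (star U) U, hU', Matrix.one_mul]
    _ = trace (diagonal x * diagonal y) := by
        rw [trace_mul_cycle, hU', Matrix.one_mul]
    _ = ∑ i, x i * y i := by simp [diagonal_mul_diagonal, trace_diagonal]

lemma sum_sq_star_mulVec (hU : U ∈ unitaryGroup n ℝ) (ξ : n → ℝ) :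
    ∑ i, (star U *ᵥ ξ) i ^ 2 = ∑ i, ξ i ^ 2 := by
  have hU' : U * star U = 1 := Unitary.mul_star_self_of_mem hU
  have key : (star U *ᵥ ξ) ⬝ᵥ (star U *ᵥ ξ) = ξ ⬝ᵥ ξ := by
    rw [dotProduct_mulVec, star_eq_conjTranspose, conjTranspose_eq_transpose_of_trivial,
      mulVec_transpose, vecMul_vecMul, ← conjTranspose_eq_transpose_of_trivial,
      ← star_eq_conjTranspose, hU', vecMul_one]
  simpa [dotProduct, sq] using key

lemma dotProduct_conj_diagonal_mulVec (c ξ : n → ℝ) :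
    ξ ⬝ᵥ (U * diagonal c * star U) *ᵥ ξ = ∑ i, c i * (star U *ᵥ ξ) i ^ 2 := by
  rw [← mulVec_mulVec, ← mulVec_mulVec, dotProduct_mulVec, ← mulVec_transpose,
    ← conjTranspose_eq_transpose_of_trivial, ← star_eq_conjTranspose]
  simp [dotProduct, mulVec_diagonal, sq, mul_left_comm]

lemma eq_conj_diagonal_eigenvalues {M : Matrix n n ℝ} (hM : M.IsHermitian) :
    M = (hM.eigenvectorUnitary : Matrix n n ℝ) * diagonal hM.eigenvalues *
      star (hM.eigenvectorUnitary : Matrix n n ℝ) := by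
  conv_lhs => rw [hM.spectral_theorem]
  simp [Unitary.conjStarAlgAut_apply]

end Conj

lemma conj_diagonal_mem_Sdelta {d : ℕ} {U : Matrix (Fin d) (Fin d) ℝ}
    (hU : U ∈ unitaryGroup (Fin d) ℝ) {θ : ℝ} {c : Fin d → ℝ} (hc : ∀ i, θ ≤ c i ∧ c i ≤ θ⁻¹) :
    U * diagonal c * star U ∈ Sdelta d θ := by
  refine ⟨isHermitian_mul_mul_conjTranspose U (isHermitian_diagonal c), fun ξ => ?_⟩
  change θ * _ ≤ quadForm d _ ξ ∧ quadForm d _ ξ ≤ θ⁻¹ * _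
  rw [quadForm_eq_dotProduct, dotProduct_conj_diagonal_mulVec, ← sum_sq_star_mulVec hU,
    Finset.mul_sum, Finset.mul_sum]
  exact ⟨Finset.sum_le_sum fun i _ => mul_le_mul_of_nonneg_right (hc i).1 (sq_nonneg _),
    Finset.sum_le_sum fun i _ => mul_le_mul_of_nonneg_right (hc i).2 (sq_nonneg _)⟩

section Pop

variable {d m : ℕ} {δhat : ℝ} (l : Fin m → Fin d → ℝ) (M : Matrix (Fin d) (Fin d) ℝ)

lemma sum_mul_quadForm_le_Pop {b : Fin m → ℝ} (hb : ∀ k, δhat / 2 ≤ b k ∧ b k ≤ 2 * δhat⁻¹) :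
    ∑ k, b k * quadForm d M (l k) ≤ Pop d m δhat l M := by
  refine le_csSup ⟨∑ k, max |δhat / 2| |2 * δhat⁻¹| * |quadForm d M (l k)|, ?_⟩ ⟨b, hb, rfl⟩
  rintro s ⟨a, ha, rfl⟩
  refine Finset.sum_le_sum fun k _ => ?_
  calc a k * quadForm d M (l k) ≤ |a k| * |quadForm d M (l k)| := by
        rw [← abs_mul]; exact le_abs_self _
    _ ≤ _ := mul_le_mul_of_nonneg_right (abs_le_max_abs_abs (ha k).1 (ha k).2) (abs_nonneg _)

lemma max_two_mul_half_le_Pop (hδhat : 0 ≤ δhat) {lam : Fin m → ℝ}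
    (hlam : ∀ k, δhat ≤ lam k ∧ lam k ≤ δhat⁻¹) :
    max (2 * ∑ k, lam k * quadForm d M (l k)) ((∑ k, lam k * quadForm d M (l k)) / 2) ≤
      Pop d m δhat l M := by
  have hinv : 0 ≤ δhat⁻¹ := inv_nonneg.mpr hδhat
  refine max_le ?_ ?_
  · rw [Finset.mul_sum]
    simpa only [mul_assoc] using sum_mul_quadForm_le_Pop l M (b := fun k => 2 * lam k)
      fun k => ⟨by linarith [(hlam k).1], by linarith [(hlam k).2]⟩
  · rw [Finset.sum_div]
    simpa only [div_mul_eq_mul_div] using sum_mul_quadForm_le_Pop l M (b := fun k => lam k / 2)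
      fun k => ⟨by linarith [(hlam k).1], by linarith [(hlam k).2]⟩

end Pop

lemma sum_mul_ite_nonneg {ι : Type*} [Fintype ι] (x : ι → ℝ) (p q : ℝ) :
    ∑ i, x i * (if 0 ≤ x i then p else q) =
      p * ∑ i, max (x i) 0 - q * ∑ i, max (-x i) 0 := by
  rw [Finset.mul_sum, Finset.mul_sum, ← Finset.sum_sub_distrib]
  refine Finset.sum_congr rfl fun i _ => ?_
  rcases le_or_gt 0 (x i) with h | h
  · simp [h, mul_comm]
  · simp [not_le.mpr h, max_eq_right h.le, max_eq_left (neg_nonneg.mpr h.le), mul_comm]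

lemma sum_abs_eq_sum_max_add_sum_max {ι : Type*} [Fintype ι] (x : ι → ℝ) :
    ∑ i, |x i| = ∑ i, max (x i) 0 + ∑ i, max (-x i) 0 := by
  rw [← Finset.sum_add_distrib]
  exact Finset.sum_congr rfl fun i _ => (max_zero_add_max_neg_zero_eq_abs_self (x i)).symm

lemma pucci_add_le_max {δ A B : ℝ} (hδ0 : 0 < δ) (hδ1 : δ ≤ 1) (hA : 0 ≤ A) (hB : 0 ≤ B) :
    2 * δ⁻¹ * A - δ / 2 * B + δ / 4 * (A + B) ≤
      max (2 * (4 * δ⁻¹ * A - δ / 4 * B)) ((4 * δ⁻¹ * A - δ / 4 * B) / 2) := by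
  have hδinv : 1 ≤ δ⁻¹ := one_le_inv₀ hδ0 |>.mpr hδ1
  rcases le_or_gt 0 (4 * δ⁻¹ * A - δ / 4 * B) with hT | hT
  · refine le_max_of_le_left ?_
    nlinarith [mul_le_mul_of_nonneg_right (show δ / 4 ≤ δ⁻¹ by linarith) hA]
  · refine le_max_of_le_right ?_
    have : δ * δ⁻¹ = 1 := mul_inv_cancel₀ hδ0.ne'
    nlinarith [mul_lt_mul_of_pos_left hT hδ0]

theorem Pop_ge_pucci_add_general (d m : ℕ)
    (δ : ℝ) (hδ : δ ∈ Set.Ioo (0:ℝ) 1)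
    (δhat : ℝ) (hδhat : δhat ∈ Set.Ioc (0:ℝ) (δ / 4))
    (l : Fin m → Fin d → ℝ)
    (hrep : ∀ a ∈ Sdelta d (δ / 4), ∃ lam : Fin m → ℝ,
      (∀ k, δhat ≤ lam k ∧ lam k ≤ δhat⁻¹) ∧
      ∀ i j, a i j = ∑ k, lam k * l k i * l k j) :
    ∀ (M : Matrix (Fin d) (Fin d) ℝ) (hM : M.IsHermitian),
      pucci d δ M + (δ / 4) * (∑ k, |hM.eigenvalues k|) ≤ Pop d m δhat l M := by
  intro M hM
  obtain ⟨hδ0, hδ1⟩ := hδ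
  set U := hM.eigenvectorUnitary
  set x := hM.eigenvalues
  set c : Fin d → ℝ := fun r => if 0 ≤ x r then 4 * δ⁻¹ else δ / 4
  have hc : ∀ r, δ / 4 ≤ c r ∧ c r ≤ (δ / 4)⁻¹ := fun r => by
    have : δ / 4 ≤ 4 * δ⁻¹ := by nlinarith [mul_inv_cancel₀ hδ0.ne']
    rw [inv_div, div_eq_mul_inv 4]
    dsimp only [c]
    split_ifs <;> constructor <;> linarith
  obtain ⟨lam, hlam, ha⟩ := hrep _ (conj_diagonal_mem_Sdelta U.2 hc)
  have hT : ∑ k, lam k * quadForm d M (l k) =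
      4 * δ⁻¹ * ∑ r, max (x r) 0 - δ / 4 * ∑ r, max (-x r) 0 := by
    rw [← trace_mul_eq_sum_mul_quadForm M _ lam l ha]
    nth_rewrite 1 [eq_conj_diagonal_eigenvalues hM]
    rw [trace_conj_diagonal_mul_conj_diagonal U.2, sum_mul_ite_nonneg]
  have hP := max_two_mul_half_le_Pop l M hδhat.1.le hlam
  rw [hT] at hP
  rw [pucci, dif_pos hM, sum_abs_eq_sum_max_add_sum_max]
  refine le_trans ?_ hP
  exact pucci_add_le_max hδ0 hδ1.le (Finset.sum_nonneg fun _ _ => le_max_right _ _)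
    (Finset.sum_nonneg fun _ _ => le_max_right _ _)

/-- Inequality (3.6.1) from Section 3 of Krylov, "An ersatz existence theorem for
fully nonlinear parabolic equations without convexity assumptions": the operator
`P` dominates Pucci's operator `P₀` plus `(δ/4) Σ |λ_k(M)|`. -/
theorem Pop_ge_pucci_add (d m : ℕ) (hd : 1 ≤ d) (hm : 1 ≤ m)
    (δ : ℝ) (hδ : δ ∈ Set.Ioo (0:ℝ) 1)
    (δhat : ℝ) (hδhat : δhat ∈ Set.Ioc (0:ℝ) (δ / 4))
    (l : Fin m → Fin d → ℝ)
    (hrep : ∀ a ∈ Sdelta d (δ / 4), ∃ lam : Fin m → ℝ,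
      (∀ k, δhat ≤ lam k ∧ lam k ≤ δhat⁻¹) ∧
      ∀ i j, a i j = ∑ k, lam k * l k i * l k j) :
    ∀ (M : Matrix (Fin d) (Fin d) ℝ) (hM : M.IsHermitian),
      pucci d δ M + (δ / 4) * (∑ k, |hM.eigenvalues k|) ≤ Pop d m δhat l M :=
  Pop_ge_pucci_add_general d m δ hδ δhat hδhat l hrep
end
end

section
/- Let r ≥ 2 be an integer, N₁ ≥ 0 a real constant, and u : ℤ → ℝ a function satisfying u(i+1) − 2u(i) + u(i−1) ≥ −N₁ for all integers i with −r+2 ≤ i ≤ r−1. Then |u(1) − u(0)| ≤ N₁ r / 2 + (2/(r−1)) · max{ |u(i)| : −r+1 ≤ i ≤ r }. -/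
/-!
A lower bound `-N₁` on the second differences lets the slope `u (k + 1) - u k` fall below
`u 1 - u 0` by at most `N₁ k`; summing, the chord from `1` to `r` bounds `(r - 1) (u 1 - u 0)`
from above by `u r - u 1 + N₁ r (r - 1) / 2`. The same bound for the mirror image
`i ↦ u (1 - i)` controls `u 1 - u 0` from below, and `|u| ≤ M` finishes.
-/

theorem slope_sub_le_of_second_diff {N₁ : ℝ} {u : ℤ → ℝ} {k : ℤ} (hk : 0 ≤ k)
    (h : ∀ i : ℤ, 1 ≤ i → i ≤ k → u (i + 1) - 2 * u i + u (i - 1) ≥ -N₁) :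
    u 1 - u 0 - N₁ * k ≤ u (k + 1) - u k := by
  induction k, hk using Int.leInduction with
  | base => simp
  | succ k hk ih =>
    have hstep := h (k + 1) (by omega) le_rfl
    rw [add_sub_cancel_right] at hstep
    have := ih fun i hi hik => h i hi (by omega)
    push_cast
    linarith

theorem chord_le_of_second_diff {N₁ : ℝ} {u : ℤ → ℝ} {k : ℤ} (hk : 1 ≤ k)
    (h : ∀ i : ℤ, 1 ≤ i → i ≤ k - 1 → u (i + 1) - 2 * u i + u (i - 1) ≥ -N₁) :
    ((k : ℝ) - 1) * (u 1 - u 0) ≤ u k - u 1 + N₁ * k * (k - 1) / 2 := by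
  induction k, hk using Int.leInduction with
  | base => simp
  | succ k hk ih =>
    have hslope := slope_sub_le_of_second_diff (k := k) (by omega)
      fun i hi hik => h i hi (by omega)
    have := ih fun i hi hik => h i hi (by omega)
    push_cast
    linarith

theorem discrete_interpolation_abs_general
    (r : ℤ) (hr : 2 ≤ r) (N₁ : ℝ) (u : ℤ → ℝ)
    (h : ∀ i : ℤ, -r + 2 ≤ i → i ≤ r - 1 → u (i + 1) - 2 * u i + u (i - 1) ≥ -N₁)
    (M : ℝ) (hM : ∀ i : ℤ, -r + 1 ≤ i → i ≤ r → |u i| ≤ M) :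
    |u 1 - u 0| ≤ N₁ * (r : ℝ) / 2 + 2 / ((r : ℝ) - 1) * M := by
  have hr1 : (0 : ℝ) < r - 1 := by
    have : (2 : ℝ) ≤ r := by exact_mod_cast hr
    linarith
  have upper := chord_le_of_second_diff (u := u) (k := r) (by omega)
    fun i hi hir => h i (by omega) hir
  have lower := chord_le_of_second_diff (u := fun i => u (1 - i)) (k := r) (by omega)
    fun i hi hir => by
      have := h (1 - i) (by omega) (by omega)
      rw [show 1 - (i + 1) = 1 - i - 1 by ring, show 1 - (i - 1) = 1 - i + 1 by ring]
      linarith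
  simp only [sub_zero, sub_self] at lower
  have bounds := fun i hi hir => abs_le.mp (hM i hi hir)
  obtain ⟨h0, -⟩ := bounds 0 (by omega) (by omega)
  obtain ⟨h1, -⟩ := bounds 1 (by omega) (by omega)
  obtain ⟨-, hur⟩ := bounds r (by omega) le_rfl
  obtain ⟨-, hur'⟩ := bounds (1 - r) (by omega) (by omega)
  have hrhs :
      ((r : ℝ) - 1) * (N₁ * r / 2 + 2 / (r - 1) * M) = N₁ * r * (r - 1) / 2 + 2 * M := by
    field_simp
  refine le_of_mul_le_mul_left ?_ hr1
  calc ((r : ℝ) - 1) * |u 1 - u 0| = |((r : ℝ) - 1) * (u 1 - u 0)| := by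
        rw [abs_mul, abs_of_pos hr1]
    _ ≤ _ := by rw [hrhs]; exact abs_le.mpr ⟨by linarith, by linarith⟩

/-- Discrete interpolation inequality (proof of Lemma 5.5 of Krylov,
"An ersatz existence theorem for fully nonlinear parabolic equations
without convexity assumptions").  The maximum of `|u i|` over
`-r+1 ≤ i ≤ r` is expressed through an arbitrary upper bound `M`. -/
theorem discrete_interpolation_abs
    (r : ℤ) (hr : 2 ≤ r) (N₁ : ℝ) (hN₁ : 0 ≤ N₁) (u : ℤ → ℝ)
    (h : ∀ i : ℤ, -r + 2 ≤ i → i ≤ r - 1 → u (i + 1) - 2 * u i + u (i - 1) ≥ -N₁)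
    (M : ℝ) (hM : ∀ i : ℤ, -r + 1 ≤ i → i ≤ r → |u i| ≤ M) :
    |u 1 - u 0| ≤ N₁ * (r : ℝ) / 2 + 2 / ((r : ℝ) - 1) * M :=
  discrete_interpolation_abs_general r hr N₁ u h M hM
end

section
/- For every integer r ≥ 2 and every function w : ℤ → ℝ: |w(1) − w(0)| ≤ (r/2) · max{ |w(i+1) − 2w(i) + w(i−1)| : |i| ≤ r } + (4/r) · max{ |w(i)| : |i| ≤ r }. -/
/-!
Writing `d k = w (k + 1) - w k`, the second differences bound the drift of the first differences,
`|d k - d 0| ≤ k A`; summing these gives the discrete Taylor estimate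
`|w n - w 0 - n d 0| ≤ n (n - 1) / 2 · A`. Since `|w n - w 0| ≤ 2 B`, taking `n = r` yields
`r |d 0| ≤ r (r - 1) / 2 · A + 2 B`, which is stronger than the claim.
-/

section DiscreteTaylor

variable {w : ℤ → ℝ} {A : ℝ}

theorem abs_first_diff_sub_le (n : ℕ)
    (hA : ∀ i : ℤ, 1 ≤ i → i ≤ n → |w (i + 1) - 2 * w i + w (i - 1)| ≤ A) :
    |(w (n + 1) - w n) - (w 1 - w 0)| ≤ n * A := by
  induction n with
  | zero => simp
  | succ m ih =>
    have hprev := ih fun i h1 h2 => hA i h1 (by push_cast; omega)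
    have hstep := hA (m + 1) (by omega) (by push_cast; rfl)
    push_cast
    calc |(w (m + 1 + 1) - w (m + 1)) - (w 1 - w 0)|
        = |(w (m + 1 + 1) - 2 * w (m + 1) + w (m + 1 - 1)) +
            ((w (m + 1) - w m) - (w 1 - w 0))| := by
          rw [add_sub_cancel_right]; ring_nf
      _ ≤ A + m * A := (abs_add_le _ _).trans (add_le_add hstep hprev)
      _ = (m + 1) * A := by ring

theorem abs_sub_sub_mul_first_diff_le (n : ℕ)
    (hA : ∀ i : ℤ, 1 ≤ i → i < n → |w (i + 1) - 2 * w i + w (i - 1)| ≤ A) :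
    |w n - w 0 - n * (w 1 - w 0)| ≤ n * (n - 1) / 2 * A := by
  induction n with
  | zero => simp
  | succ m ih =>
    have hprev := ih fun i h1 h2 => hA i h1 (by push_cast; omega)
    have hdrift := abs_first_diff_sub_le m fun i h1 h2 => hA i h1 (by push_cast; omega)
    push_cast
    calc |w (m + 1) - w 0 - (m + 1) * (w 1 - w 0)|
        = |(w m - w 0 - m * (w 1 - w 0)) + ((w (m + 1) - w m) - (w 1 - w 0))| := by ring_nf
      _ ≤ m * (m - 1) / 2 * A + m * A := (abs_add_le _ _).trans (add_le_add hprev hdrift)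
      _ = (m + 1) * (m + 1 - 1) / 2 * A := by ring

end DiscreteTaylor

/-- Inequality (9.24.7) of Krylov, "An ersatz existence theorem for fully
nonlinear parabolic equations without convexity assumptions": a discrete
interpolation inequality bounding a first difference by the second
differences and by the size of the function.  The maxima over `|i| ≤ r`
are expressed through arbitrary upper bounds `A` and `B`. -/
theorem discrete_interpolation_first_by_second
    (r : ℤ) (hr : 2 ≤ r) (w : ℤ → ℝ) (A B : ℝ)
    (hA : ∀ i : ℤ, |i| ≤ r → |w (i + 1) - 2 * w i + w (i - 1)| ≤ A)
    (hB : ∀ i : ℤ, |i| ≤ r → |w i| ≤ B) :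
    |w 1 - w 0| ≤ (r : ℝ) / 2 * A + 4 / (r : ℝ) * B := by
  lift r to ℕ using by omega
  have hA0 : 0 ≤ A := (abs_nonneg _).trans (hA 0 (by simp))
  have hB0 : 0 ≤ B := (abs_nonneg _).trans (hB 0 (by simp))
  have hr0 : (0 : ℝ) < r := by exact_mod_cast (by omega : 0 < r)
  have htaylor := abs_sub_sub_mul_first_diff_le (w := w) (A := A) r
    fun i h1 h2 => hA i (by rw [abs_of_nonneg (by omega)]; omega)
  have hends : |w r - w 0| ≤ 2 * B := by
    have hwr := hB r (by simp)
    have hw0 := hB 0 (by simp)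
    linarith [abs_sub (w r) (w 0)]
  have hscaled : r * |w 1 - w 0| ≤ 2 * B + r * (r - 1) / 2 * A := by
    have h := abs_sub (w r - w 0) (w r - w 0 - r * (w 1 - w 0))
    rw [sub_sub_cancel, abs_mul, abs_of_pos hr0] at h
    linarith
  rw [Int.cast_natCast,
    show (r : ℝ) / 2 * A + 4 / r * B = (r ^ 2 / 2 * A + 4 * B) / r by field_simp,
    le_div_iff₀ hr0]
  nlinarith [mul_nonneg hr0.le hA0]
end
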